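/- arXiv:1412.3512 — 2 statements merged into one kernel-verified Lean document; each statement's English description precedes it below -/
import Mathlib

section
/- Define a map φ on 132-avoiding permutations recursively by φ(empty) = empty and φ(α ⊖ (β ⊕ 1)) = φ(β) ⊖ (φ(α) ⊕ 1), using the unique decomposition of a nonempty 132-avoiding permutation as α ⊖ (β ⊕ 1) with α, β 132-avoiding. Then φ maps S_n(132) to itself and is an involution, i.e., φ(φ(π)) = π for all π ∈ S_n(132). -/
open Equiv Finset

/-- π avoids the classical pattern 132. -/
def avoids132 {n : ℕ} (π : Equiv.Perm (Fin n)) : Prop :=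
  ¬ ∃ i j k : Fin n, i < j ∧ j < k ∧ π i < π k ∧ π k < π j

/-- π avoids the classical pattern 231. -/
def avoids231 {n : ℕ} (π : Equiv.Perm (Fin n)) : Prop :=
  ¬ ∃ i j k : Fin n, i < j ∧ j < k ∧ π k < π i ∧ π i < π j

/-- π avoids the classical pattern 312. -/
def avoids312 {n : ℕ} (π : Equiv.Perm (Fin n)) : Prop :=
  ¬ ∃ i j k : Fin n, i < j ∧ j < k ∧ π j < π k ∧ π k < π i

/-- Direct sum α ⊕ β of permutations. -/
def dsum {a b : ℕ} (α : Equiv.Perm (Fin a)) (β : Equiv.Perm (Fin b)) :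
    Equiv.Perm (Fin (a + b)) :=
  finSumFinEquiv.symm.trans ((Equiv.sumCongr α β).trans finSumFinEquiv)

/-- Skew sum α ⊖ β of permutations. -/
def ssum {a b : ℕ} (α : Equiv.Perm (Fin a)) (β : Equiv.Perm (Fin b)) :
    Equiv.Perm (Fin (a + b)) :=
  finSumFinEquiv.symm.trans ((Equiv.sumCongr α β).trans
    ((Equiv.sumComm (Fin a) (Fin b)).trans
      (finSumFinEquiv.trans (finCongr (Nat.add_comm b a)))))

/-- Transport a permutation of Fin m along an equality m = n. -/
def castPerm {m n : ℕ} (h : m = n) (π : Equiv.Perm (Fin m)) : Equiv.Perm (Fin n) :=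
  Equiv.permCongr (finCongr h) π

/-- Number of descents. -/
def des {n : ℕ} (π : Equiv.Perm (Fin n)) : ℕ :=
  (Finset.univ.filter (fun p : Fin n × Fin n =>
    (p.1 : ℕ) + 1 = (p.2 : ℕ) ∧ π p.2 < π p.1)).card

/-- Number of occurrences of the vincular pattern 2-\underline{31}. -/
def occ2_31 {n : ℕ} (π : Equiv.Perm (Fin n)) : ℕ :=
  (Finset.univ.filter (fun p : Fin n × Fin n × Fin n =>
    p.1 < p.2.1 ∧ (p.2.1 : ℕ) + 1 = (p.2.2 : ℕ) ∧
      π p.2.2 < π p.1 ∧ π p.1 < π p.2.1)).card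

/-- Number of occurrences of the vincular pattern 2-\underline{13}. -/
def occ2_13 {n : ℕ} (π : Equiv.Perm (Fin n)) : ℕ :=
  (Finset.univ.filter (fun p : Fin n × Fin n × Fin n =>
    p.1 < p.2.1 ∧ (p.2.1 : ℕ) + 1 = (p.2.2 : ℕ) ∧
      π p.2.1 < π p.1 ∧ π p.1 < π p.2.2)).card

/-- Number of occurrences of the vincular pattern \underline{21}-3. -/
def occ21_3 {n : ℕ} (π : Equiv.Perm (Fin n)) : ℕ :=
  (Finset.univ.filter (fun p : Fin n × Fin n × Fin n =>
    (p.1 : ℕ) + 1 = (p.2.1 : ℕ) ∧ p.2.1 < p.2.2 ∧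
      π p.2.1 < π p.1 ∧ π p.1 < π p.2.2)).card

/-- Number of occurrences of the vincular pattern \underline{23}-1. -/
def occ23_1 {n : ℕ} (π : Equiv.Perm (Fin n)) : ℕ :=
  (Finset.univ.filter (fun p : Fin n × Fin n × Fin n =>
    (p.1 : ℕ) + 1 = (p.2.1 : ℕ) ∧ p.2.1 < p.2.2 ∧
      π p.2.2 < π p.1 ∧ π p.1 < π p.2.1)).card

/-- Number of occurrences of the vincular pattern 3-\underline{12}. -/
def occ3_12 {n : ℕ} (π : Equiv.Perm (Fin n)) : ℕ :=
  (Finset.univ.filter (fun p : Fin n × Fin n × Fin n =>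
    p.1 < p.2.1 ∧ (p.2.1 : ℕ) + 1 = (p.2.2 : ℕ) ∧
      π p.2.1 < π p.2.2 ∧ π p.2.2 < π p.1)).card

/-- Number of occurrences of the vincular pattern \underline{31}-2. -/
def occ31_2 {n : ℕ} (π : Equiv.Perm (Fin n)) : ℕ :=
  (Finset.univ.filter (fun p : Fin n × Fin n × Fin n =>
    (p.1 : ℕ) + 1 = (p.2.1 : ℕ) ∧ p.2.1 < p.2.2 ∧
      π p.2.1 < π p.2.2 ∧ π p.2.2 < π p.1)).card

/-- Number of right-to-left maxima. -/
def rlmax {n : ℕ} (π : Equiv.Perm (Fin n)) : ℕ :=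
  (Finset.univ.filter (fun i : Fin n => ∀ j, i < j → π j < π i)).card

/-- Number of right-to-left minima. -/
def rlmin {n : ℕ} (π : Equiv.Perm (Fin n)) : ℕ :=
  (Finset.univ.filter (fun i : Fin n => ∀ j, i < j → π i < π j)).card

/-- Occurrences of the pattern 1-2 ending at the last position: indices i < n-1 with π_i < π_{n-1} (plus the anchor). -/
def stat12end {n : ℕ} (π : Equiv.Perm (Fin n)) : ℕ :=
  (Finset.univ.filter (fun p : Fin n × Fin n =>
    p.1 < p.2 ∧ (p.2 : ℕ) + 1 = n ∧ π p.1 < π p.2)).card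

/-- Occurrences of the pattern 2-1 ending at the last position. -/
def stat21end {n : ℕ} (π : Equiv.Perm (Fin n)) : ℕ :=
  (Finset.univ.filter (fun p : Fin n × Fin n =>
    p.1 < p.2 ∧ (p.2 : ℕ) + 1 = n ∧ π p.2 < π p.1)).card

/-!
The last entry `b` of a 132-avoiding `π` of length `m + 1` splits it: no entry smaller than `b`
precedes an entry larger than `b`, since together with the last entry they would form a 132.
Hence the entries larger than `b` fill the first `m - b` positions, and `π = α ⊖ (β ⊕ 1)` with
`α`, `β` again 132-avoiding; conversely `α ⊖ (β ⊕ 1)` avoids 132 whenever `α` and `β` do.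
Strong induction on the length then gives
`φ (φ (α ⊖ (β ⊕ 1))) = φ (φ β ⊖ (φ α ⊕ 1)) = φ (φ α) ⊖ (φ (φ β) ⊕ 1) = α ⊖ (β ⊕ 1)`,
up to transport along `a + (b + 1) = b + (a + 1)`.
-/

section Evaluation

variable {a b : ℕ} (α : Perm (Fin a)) (β : Perm (Fin b))

lemma dsum_apply_of_lt (i : Fin (a + b)) (h : (i : ℕ) < a) :
    (dsum α β i : ℕ) = α ⟨i, h⟩ := by
  change (dsum α β (Fin.castAdd b ⟨i, h⟩) : ℕ) = _
  simp only [dsum, Equiv.trans_apply, finSumFinEquiv_symm_apply_castAdd, Equiv.sumCongr_apply,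
    Sum.map_inl, finSumFinEquiv_apply_left, Fin.val_castAdd]

lemma dsum_apply_of_ge (i : Fin (a + b)) (h : a ≤ (i : ℕ)) :
    (dsum α β i : ℕ) = a + β ⟨i - a, by omega⟩ := by
  conv_lhs => rw [show i = Fin.natAdd a ⟨i - a, by omega⟩ from Fin.ext (by simp; omega)]
  simp only [dsum, Equiv.trans_apply, finSumFinEquiv_symm_apply_natAdd, Equiv.sumCongr_apply,
    Sum.map_inr, finSumFinEquiv_apply_right, Fin.val_natAdd]

lemma ssum_apply_of_lt (i : Fin (a + b)) (h : (i : ℕ) < a) :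
    (ssum α β i : ℕ) = b + α ⟨i, h⟩ := by
  change (ssum α β (Fin.castAdd b ⟨i, h⟩) : ℕ) = _
  simp only [ssum, Equiv.trans_apply, finSumFinEquiv_symm_apply_castAdd, Equiv.sumCongr_apply,
    Sum.map_inl, Equiv.sumComm_apply, Sum.swap_inl, finSumFinEquiv_apply_right, finCongr_apply,
    Fin.val_cast, Fin.val_natAdd]

lemma ssum_apply_of_ge (i : Fin (a + b)) (h : a ≤ (i : ℕ)) :
    (ssum α β i : ℕ) = β ⟨i - a, by omega⟩ := by
  conv_lhs => rw [show i = Fin.natAdd a ⟨i - a, by omega⟩ from Fin.ext (by simp; omega)]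
  simp only [ssum, Equiv.trans_apply, finSumFinEquiv_symm_apply_natAdd, Equiv.sumCongr_apply,
    Sum.map_inr, Equiv.sumComm_apply, Sum.swap_inr, finSumFinEquiv_apply_left, finCongr_apply,
    Fin.val_cast, Fin.val_castAdd]

lemma ssum_dsum_one_apply_of_lt (i : Fin (a + (b + 1))) (h : (i : ℕ) < a) :
    (ssum α (dsum β 1) i : ℕ) = b + 1 + α ⟨i, h⟩ :=
  ssum_apply_of_lt α _ i h

lemma ssum_dsum_one_apply_of_mem_Ico (i : Fin (a + (b + 1))) (h₁ : a ≤ (i : ℕ))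
    (h₂ : (i : ℕ) < a + b) :
    (ssum α (dsum β 1) i : ℕ) = β ⟨i - a, by omega⟩ := by
  rw [ssum_apply_of_ge α _ i h₁, dsum_apply_of_lt β 1 _ (by simp; omega)]

lemma ssum_dsum_one_apply_of_eq (i : Fin (a + (b + 1))) (h : (i : ℕ) = a + b) :
    (ssum α (dsum β 1) i : ℕ) = b := by
  rw [ssum_apply_of_ge α _ i (by omega), dsum_apply_of_ge β 1 _ (by simp; omega)]
  simp

end Evaluation

lemma avoids132_ssum {a b : ℕ} {α : Perm (Fin a)} {β : Perm (Fin b)}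
    (hα : avoids132 α) (hβ : avoids132 β) : avoids132 (ssum α β) := by
  rintro ⟨i, j, k, hij, hjk, hik, hkj⟩
  rw [Fin.lt_def] at hij hjk hik hkj
  rcases lt_or_ge (k : ℕ) a with hk | hk
  · rw [ssum_apply_of_lt α β i (by omega), ssum_apply_of_lt α β k hk] at hik
    rw [ssum_apply_of_lt α β j (by omega), ssum_apply_of_lt α β k hk] at hkj
    exact hα ⟨_, _, _, Fin.mk_lt_mk.2 hij, Fin.mk_lt_mk.2 hjk, Fin.lt_def.2 (by omega),
      Fin.lt_def.2 (by omega)⟩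
  · -- positions before `a` carry the large values, so the `1` of the pattern is also past `a`
    have hi : a ≤ (i : ℕ) := by
      by_contra! hi
      have := (β ⟨k - a, by omega⟩).isLt
      rw [ssum_apply_of_lt α β i hi, ssum_apply_of_ge α β k hk] at hik
      omega
    rw [ssum_apply_of_ge α β i hi, ssum_apply_of_ge α β k hk] at hik
    rw [ssum_apply_of_ge α β j (by omega), ssum_apply_of_ge α β k hk] at hkj
    exact hβ ⟨_, _, _, Fin.mk_lt_mk.2 (by omega), Fin.mk_lt_mk.2 (by omega), hik, hkj⟩

lemma avoids132_dsum_one {b : ℕ} {β : Perm (Fin b)} (hβ : avoids132 β) :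
    avoids132 (dsum β (1 : Perm (Fin 1))) := by
  rintro ⟨i, j, k, hij, hjk, hik, hkj⟩
  rw [Fin.lt_def] at hij hjk hik hkj
  have hk : (k : ℕ) < b := by
    by_contra! hk
    have := (β ⟨j, by omega⟩).isLt
    rw [dsum_apply_of_lt β 1 j (by omega), dsum_apply_of_ge β 1 k hk] at hkj
    omega
  rw [dsum_apply_of_lt β 1 i (by omega), dsum_apply_of_lt β 1 k hk] at hik
  rw [dsum_apply_of_lt β 1 j (by omega), dsum_apply_of_lt β 1 k hk] at hkj
  exact hβ ⟨_, _, _, Fin.mk_lt_mk.2 hij, Fin.mk_lt_mk.2 hjk, hik, hkj⟩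

@[simp]
lemma castPerm_rfl {n : ℕ} (π : Perm (Fin n)) : castPerm rfl π = π := by
  ext; simp [castPerm]

lemma castPerm_castPerm {m n k : ℕ} (h : m = n) (h' : n = k) (π : Perm (Fin m)) :
    castPerm h' (castPerm h π) = castPerm (h.trans h') π := by
  subst h h'; simp

lemma castPerm_apply_val {m n : ℕ} (h : m = n) (π : Perm (Fin m)) (i : Fin n) :
    (castPerm h π i : ℕ) = π (Fin.cast h.symm i) := by
  subst h; simp

lemma avoids132_castPerm {m n : ℕ} (h : m = n) {π : Perm (Fin m)} (hπ : avoids132 π) :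
    avoids132 (castPerm h π) := by
  subst h; simpa

lemma apply_castPerm (φ : ∀ n : ℕ, Perm (Fin n) → Perm (Fin n)) {m n : ℕ} (h : m = n)
    (π : Perm (Fin m)) : φ n (castPerm h π) = castPerm h (φ m π) := by
  subst h; simp

noncomputable def blockPerm {n : ℕ} (π : Perm (Fin n)) (p v a : ℕ) (hp : p + a ≤ n)
    (hv : ∀ i : Fin a, v ≤ (π ⟨p + i, by omega⟩ : ℕ) ∧ (π ⟨p + i, by omega⟩ : ℕ) < v + a) :
    Perm (Fin a) :=
  Equiv.ofBijective (fun i => ⟨π ⟨p + i, by omega⟩ - v, by have := hv i; omega⟩) <|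
    Finite.injective_iff_bijective.mp fun i j hij => by
      have := hv i
      have := hv j
      have := π.injective (Fin.ext (by simp only [Fin.mk.injEq] at hij; omega) :
        π ⟨p + i, by omega⟩ = π ⟨p + j, by omega⟩)
      simp only [Fin.mk.injEq] at this
      exact Fin.ext (by omega)

section Block

variable {n : ℕ} {π : Perm (Fin n)} {p v a : ℕ} {hp : p + a ≤ n}
  {hv : ∀ i : Fin a, v ≤ (π ⟨p + i, by omega⟩ : ℕ) ∧ (π ⟨p + i, by omega⟩ : ℕ) < v + a}

lemma blockPerm_apply_val (i : Fin a) :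
    (blockPerm π p v a hp hv i : ℕ) = π ⟨p + i, by omega⟩ - v :=
  rfl

lemma avoids132_blockPerm (hπ : avoids132 π) : avoids132 (blockPerm π p v a hp hv) := by
  rintro ⟨i, j, k, hij, hjk, hik, hkj⟩
  rw [Fin.lt_def, blockPerm_apply_val, blockPerm_apply_val] at hik hkj
  have := hv i; have := hv j; have := hv k
  exact hπ ⟨⟨p + i, by omega⟩, ⟨p + j, by omega⟩, ⟨p + k, by omega⟩, Fin.mk_lt_mk.2 (by omega),
    Fin.mk_lt_mk.2 (by omega), Fin.lt_def.2 (by omega), Fin.lt_def.2 (by omega)⟩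

end Block

lemma Fin.mem_iff_lt_card_of_isLowerSet {n : ℕ} {S : Finset (Fin n)}
    (hS : IsLowerSet (S : Set (Fin n))) (i : Fin n) : i ∈ S ↔ (i : ℕ) < #S := by
  constructor
  · intro hi
    have := card_le_card fun j hj => hS (mem_Iic.1 hj) hi
    rw [Fin.card_Iic] at this
    omega
  · intro hi
    by_contra h
    have := card_le_card fun j hj => mem_Iio.2 (lt_of_not_ge fun hij => h (hS hij hj))
    rw [Fin.card_Iio] at this
    omega

lemma card_filter_apply_lt_apply {n : ℕ} (π : Perm (Fin n)) (x : Fin n) :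
    #(univ.filter fun i => π x < π i) = n - 1 - π x := by
  rw [← Fin.card_Ioi]
  exact card_nbij π (fun i hi => by simpa using hi) π.injective.injOn fun v hv =>
    ⟨π.symm v, by simpa using hv, by simp⟩

lemma isLowerSet_apply_last_lt_of_avoids132 {m : ℕ} {π : Perm (Fin (m + 1))}
    (hπ : avoids132 π) :
    IsLowerSet ((univ.filter fun i => π (Fin.last m) < π i : Finset _) : Set (Fin (m + 1))) := by
  intro j i hij hj
  simp only [coe_filter, mem_univ, true_and, Set.mem_ofPred_eq] at hj ⊢
  rcases hij.lt_or_eq with hij | rfl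
  · have hjm : j < Fin.last m := (Fin.le_last j).lt_of_ne (by rintro rfl; exact hj.false)
    by_contra! hi
    exact hπ ⟨i, j, Fin.last m, hij, hjm,
      hi.lt_of_ne (π.injective.ne (hij.trans hjm).ne), hj⟩
  · exact hj

lemma apply_last_lt_iff_of_avoids132 {m : ℕ} {π : Perm (Fin (m + 1))} (hπ : avoids132 π)
    (i : Fin (m + 1)) : π (Fin.last m) < π i ↔ (i : ℕ) < m - π (Fin.last m) := by
  have := (Fin.mem_iff_lt_card_of_isLowerSet (isLowerSet_apply_last_lt_of_avoids132 hπ) i)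
  rwa [card_filter_apply_lt_apply, Nat.add_sub_cancel, mem_filter,
    and_iff_right (mem_univ _)] at this

theorem exists_eq_castPerm_ssum_dsum_one_of_avoids132 {m : ℕ} {π : Perm (Fin (m + 1))}
    (hπ : avoids132 π) :
    ∃ (a b : ℕ) (h : a + (b + 1) = m + 1) (α : Perm (Fin a)) (β : Perm (Fin b)),
      avoids132 α ∧ avoids132 β ∧ π = castPerm h (ssum α (dsum β 1)) := by
  set b : ℕ := (π (Fin.last m) : ℕ)
  set a := m - b
  have hbm : b ≤ m := Fin.is_le _
  have hhigh (i : Fin (m + 1)) : b < π i ↔ (i : ℕ) < a := apply_last_lt_iff_of_avoids132 hπ i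
  have hne (i : Fin (m + 1)) (hi : (i : ℕ) < m) : (π i : ℕ) ≠ b := fun h =>
    hi.ne (congrArg Fin.val (π.injective (Fin.ext h)))
  let α := blockPerm π 0 (b + 1) a (by omega) fun i =>
    ⟨(hhigh _).2 (by simp), by have := (π ⟨0 + i, by omega⟩).isLt; omega⟩
  let β := blockPerm π a 0 b (by omega) fun i =>
    ⟨Nat.zero_le _, by
      have := (hhigh ⟨a + i, by omega⟩).not.2 (by simp)
      have := hne ⟨a + i, by omega⟩ (by simp; omega)
      omega⟩
  refine ⟨a, b, by omega, α, β, avoids132_blockPerm hπ, avoids132_blockPerm hπ, ?_⟩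
  ext i
  rw [castPerm_apply_val]
  rcases lt_or_ge (i : ℕ) a with hi | hi
  · rw [ssum_dsum_one_apply_of_lt _ _ _ hi, blockPerm_apply_val]
    have := (hhigh i).2 hi
    simp only [Fin.val_cast, zero_add, Fin.eta]
    omega
  rcases lt_or_ge (i : ℕ) (a + b) with hi' | hi'
  · rw [ssum_dsum_one_apply_of_mem_Ico _ _ _ hi hi', blockPerm_apply_val]
    simp only [Fin.val_cast, Nat.sub_zero, Nat.add_sub_cancel' hi, Fin.eta]
  · rw [ssum_dsum_one_apply_of_eq _ _ _ (by simp; omega)]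
    obtain rfl : i = Fin.last m := Fin.ext (by simp; omega)
    rfl

theorem stmt3
    (φ : ∀ n : ℕ, Equiv.Perm (Fin n) → Equiv.Perm (Fin n))
    (hrec : ∀ (a b : ℕ) (α : Equiv.Perm (Fin a)) (β : Equiv.Perm (Fin b)),
      avoids132 α → avoids132 β →
      φ (a + (b + 1)) (ssum α (dsum β (1 : Equiv.Perm (Fin 1)))) =
        castPerm (show b + (a + 1) = a + (b + 1) by omega)
          (ssum (φ b β) (dsum (φ a α) (1 : Equiv.Perm (Fin 1))))) :
    ∀ (n : ℕ) (π : Equiv.Perm (Fin n)), avoids132 π →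
      avoids132 (φ n π) ∧ φ n (φ n π) = π := by
  intro n
  induction n using Nat.strong_induction_on with
  | _ n ih =>
  intro π hπ
  rcases n with _ | m
  · exact ⟨fun ⟨i, _⟩ => i.elim0, Subsingleton.elim _ _⟩
  obtain ⟨a, b, h, α, β, hα, hβ, rfl⟩ := exists_eq_castPerm_ssum_dsum_one_of_avoids132 hπ
  obtain ⟨hφα, hφφα⟩ := ih a (by omega) α hα
  obtain ⟨hφβ, hφφβ⟩ := ih b (by omega) β hβ
  have hφπ : φ (m + 1) (castPerm h (ssum α (dsum β 1))) =
      castPerm (show b + (a + 1) = m + 1 by omega) (ssum (φ b β) (dsum (φ a α) 1)) := by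
    rw [apply_castPerm φ, hrec a b α β hα hβ, castPerm_castPerm]
  rw [hφπ, apply_castPerm φ, hrec b a _ _ hφβ hφα, hφφα, hφφβ, castPerm_castPerm]
  exact ⟨avoids132_castPerm _ (avoids132_ssum hφβ (avoids132_dsum_one hφα)), rfl⟩
end

section
/- The multistatistics (\underline{23}-1, 3-\underline{12}, des) and (3-\underline{12}, \underline{23}-1, des) are equidistributed on S_n(132): for all a, b, c, the number of π ∈ S_n(132) with a occurrences of \underline{23}-1, b occurrences of 3-\underline{12}, and c descents equals the number of π ∈ S_n(132) with a occurrences of 3-\underline{12}, b occurrences of \underline{23}-1, and c descents. -/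
open Equiv Finset

/-!
Inversion maps `S_n(132)` to itself, and on this set it exchanges the two vincular
statistics and preserves descents. Since inversion swaps positions and values, an occurrence of
\underline{23}-1 in `π⁻¹` is a triple of positions `i < a < b` of `π` with `π a + 1 = π b < π i`,
while an occurrence of 3-\underline{12} in `π` is a triple `i < b - 1 < b` with
`π (b - 1) < π b < π i`. In a 132-avoider the value `π b - 1` lies to the left of `b` exactly when
`b - 1` is an ascent, and then every `i < b` with `π b < π i` lies to the left of both. So both
kinds of occurrences are determined by the same pairs `(i, b)`. Forgetting `i`, the same
correspondence matches the ascents of `π⁻¹` with those of `π`, hence also the descents.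
-/

def asc {n : ℕ} (π : Perm (Fin n)) : ℕ :=
  #{p : Fin n × Fin n | (p.1 : ℕ) + 1 = p.2 ∧ π p.1 < π p.2}

lemma card_filter_prod_eq_card_filter_exists {β γ : Type*} [Fintype β] [Fintype γ]
    [DecidableEq γ] (P : β → γ → Prop) [∀ m b, Decidable (P m b)]
    [DecidablePred fun b => ∃ m, P m b] (hP : ∀ {m m' b}, P m b → P m' b → m = m') :
    #{p : β × γ | P p.1 p.2} = #{b | ∃ m, P m b} := by
  rw [← card_image_of_injOn (f := Prod.snd)]
  · congr 1
    ext b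
    simp
  · rintro ⟨m, b⟩ hp ⟨m', b'⟩ hp' (rfl : b = b')
    simp only [coe_filter, mem_univ, true_and, Set.mem_ofPred_eq] at hp hp'
    rw [hP hp hp']

lemma card_filter_prod_prod_eq_card_filter_exists {α β γ : Type*} [Fintype α] [Fintype β]
    [Fintype γ] [DecidableEq α] [DecidableEq γ] (P : α → β → γ → Prop)
    [∀ i m b, Decidable (P i m b)] [DecidablePred fun q : α × γ => ∃ m, P q.1 m q.2]
    (hP : ∀ {i m m' b}, P i m b → P i m' b → m = m') :
    #{p : α × β × γ | P p.1 p.2.1 p.2.2} = #{q : α × γ | ∃ m, P q.1 m q.2} := by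
  rw [← card_image_of_injOn (f := fun p : α × β × γ => (p.1, p.2.2))]
  · congr 1
    ext ⟨i, b⟩
    simp
  · rintro ⟨i, m, b⟩ hp ⟨i', m', b'⟩ hp' he
    obtain ⟨rfl, rfl⟩ := Prod.ext_iff.mp he
    simp only [coe_filter, mem_univ, true_and, Set.mem_ofPred_eq] at hp hp'
    rw [hP hp hp']

lemma Fin.exists_val_add_one_eq {n : ℕ} {b : Fin n} (hb : 0 < (b : ℕ)) :
    ∃ b' : Fin n, (b' : ℕ) + 1 = b :=
  ⟨⟨b - 1, by omega⟩, by simp only; omega⟩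

section Inverse

variable {n : ℕ} (π : Perm (Fin n))

lemma des_add_asc :
    des π + asc π = #{p : Fin n × Fin n | (p.1 : ℕ) + 1 = p.2} := by
  rw [des, asc, ← card_union_of_disjoint]
  · congr 1
    ext ⟨i, j⟩
    simp only [mem_union, mem_filter, mem_univ, true_and]
    refine ⟨fun h => h.elim And.left And.left, fun hij => ?_⟩
    have := π.injective.ne (show i ≠ j by grind)
    grind
  · rw [disjoint_filter]
    exact fun p _ h₁ h₂ => lt_asymm h₁.2 h₂.2

lemma asc_inv_eq_card :
    asc π⁻¹ = #{p : Fin n × Fin n | (π p.1 : ℕ) + 1 = π p.2 ∧ p.1 < p.2} :=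
  card_equiv (π⁻¹.prodCongr π⁻¹) fun p => by simp

lemma occ23_1_inv_eq_card :
    occ23_1 π⁻¹ = #{p : Fin n × Fin n × Fin n |
      p.1 < p.2.1 ∧ (π p.2.1 : ℕ) + 1 = π p.2.2 ∧ p.2.1 < p.2.2 ∧ π p.2.2 < π p.1} := by
  refine card_nbij' (fun p => (π⁻¹ p.2.2, π⁻¹ p.1, π⁻¹ p.2.1))
    (fun q => (π q.2.1, π q.2.2, π q.1)) ?_ ?_ ?_ ?_
  all_goals
    intro p hp
    simp only [coe_filter, mem_univ, true_and, Set.mem_ofPred_eq, Perm.coe_inv,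
      apply_symm_apply, symm_apply_apply] at hp ⊢ <;>
    grind

end Inverse

namespace avoids132

variable {n : ℕ} {π : Perm (Fin n)} (h : avoids132 π)
include h

lemma inv : avoids132 π⁻¹ := by
  rintro ⟨i, j, k, hij, hjk, h1, h2⟩
  exact h ⟨π⁻¹ i, π⁻¹ k, π⁻¹ j, h1, h2, by simpa using hij, by simpa using hjk⟩

lemma apply_lt_iff_lt_of_add_one_eq {a b' b : Fin n} (hb : (b' : ℕ) + 1 = b)
    (hv : (π a : ℕ) + 1 = π b) : π b' < π b ↔ a < b := by
  have hb'b : b' < b := by grind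
  constructor
  · intro hasc
    by_contra! hba
    have hab : b < a := lt_of_le_of_ne hba fun e => by subst e; omega
    have hb'a : π b' ≠ π a := π.injective.ne (by grind)
    exact h ⟨b', b, a, hb'b, hab, by grind, by grind⟩
  · intro hab
    rcases (show a ≤ b' by grind).eq_or_lt with rfl | hab'
    · grind
    · by_contra! hbb'
      have : π b ≠ π b' := π.injective.ne hb'b.ne'
      exact h ⟨a, b', b, hab', hb'b, by grind, by grind⟩

lemma lt_of_apply_add_one_eq {i a b : Fin n} (hib : i < b) (hv : (π a : ℕ) + 1 = π b)
    (hbi : π b < π i) : i < a := by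
  by_contra! hai
  have hai : a < i := lt_of_le_of_ne hai fun e => by subst e; grind
  exact h ⟨a, i, b, hai, hib, by grind, hbi⟩

lemma exists_ascent_iff (b : Fin n) :
    (∃ m : Fin n, (m : ℕ) + 1 = b ∧ π m < π b) ↔
      ∃ m, (π m : ℕ) + 1 = π b ∧ m < b := by
  constructor
  · rintro ⟨m, hm, hasc⟩
    obtain ⟨v, hv⟩ := Fin.exists_val_add_one_eq (Nat.zero_lt_of_lt (Fin.lt_def.mp hasc))
    have hv : (π (π⁻¹ v) : ℕ) + 1 = π b := by simpa using hv
    exact ⟨π⁻¹ v, hv, (h.apply_lt_iff_lt_of_add_one_eq hm hv).1 hasc⟩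
  · rintro ⟨a, hv, hab⟩
    obtain ⟨m, hm⟩ := Fin.exists_val_add_one_eq (Nat.zero_lt_of_lt (Fin.lt_def.mp hab))
    exact ⟨m, hm, (h.apply_lt_iff_lt_of_add_one_eq hm hv).2 hab⟩

lemma exists_occ3_12_iff (i b : Fin n) :
    (∃ m : Fin n, i < m ∧ (m : ℕ) + 1 = b ∧ π m < π b ∧ π b < π i) ↔
      ∃ m, i < m ∧ (π m : ℕ) + 1 = π b ∧ m < b ∧ π b < π i := by
  constructor
  · rintro ⟨m, him, hm, hasc, hbi⟩
    obtain ⟨a, hv, hab⟩ := (h.exists_ascent_iff b).1 ⟨m, hm, hasc⟩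
    exact ⟨a, h.lt_of_apply_add_one_eq (him.trans (by grind)) hv hbi, hv, hab, hbi⟩
  · rintro ⟨a, hia, hv, hab, hbi⟩
    obtain ⟨m, hm, hasc⟩ := (h.exists_ascent_iff b).2 ⟨a, hv, hab⟩
    exact ⟨m, by grind, hm, hasc, hbi⟩

lemma asc_inv : asc π⁻¹ = asc π :=
  calc asc π⁻¹ = #{p : Fin n × Fin n | (π p.1 : ℕ) + 1 = π p.2 ∧ p.1 < p.2} :=
        asc_inv_eq_card π
    _ = #{b | ∃ m, (π m : ℕ) + 1 = π b ∧ m < b} :=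
        card_filter_prod_eq_card_filter_exists (fun m b => (π m : ℕ) + 1 = π b ∧ m < b)
          fun h₁ h₂ => π.injective (Fin.ext (by omega))
    _ = #{b : Fin n | ∃ m : Fin n, (m : ℕ) + 1 = b ∧ π m < π b} := by
        simp_rw [h.exists_ascent_iff]
    _ = asc π :=
        (card_filter_prod_eq_card_filter_exists
          (fun m b : Fin n => (m : ℕ) + 1 = b ∧ π m < π b)
          fun h₁ h₂ => Fin.ext (by omega)).symm

lemma des_inv : des π⁻¹ = des π := by
  linarith [des_add_asc π, des_add_asc π⁻¹, h.asc_inv]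

lemma occ23_1_inv : occ23_1 π⁻¹ = occ3_12 π :=
  calc occ23_1 π⁻¹ = #{p : Fin n × Fin n × Fin n |
        p.1 < p.2.1 ∧ (π p.2.1 : ℕ) + 1 = π p.2.2 ∧ p.2.1 < p.2.2 ∧ π p.2.2 < π p.1} :=
        occ23_1_inv_eq_card π
    _ = #{q : Fin n × Fin n |
          ∃ m, q.1 < m ∧ (π m : ℕ) + 1 = π q.2 ∧ m < q.2 ∧ π q.2 < π q.1} :=
        card_filter_prod_prod_eq_card_filter_exists
          (fun i m b => i < m ∧ (π m : ℕ) + 1 = π b ∧ m < b ∧ π b < π i)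
          fun h₁ h₂ => π.injective (Fin.ext (by omega))
    _ = #{q : Fin n × Fin n | ∃ m : Fin n,
          q.1 < m ∧ (m : ℕ) + 1 = q.2 ∧ π m < π q.2 ∧ π q.2 < π q.1} := by
        simp_rw [h.exists_occ3_12_iff]
    _ = occ3_12 π :=
        (card_filter_prod_prod_eq_card_filter_exists
          (fun i m b : Fin n => i < m ∧ (m : ℕ) + 1 = b ∧ π m < π b ∧ π b < π i)
          fun h₁ h₂ => Fin.ext (by omega)).symm

lemma occ3_12_inv : occ3_12 π⁻¹ = occ23_1 π := by
  simpa using h.inv.occ23_1_inv.symm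

end avoids132

lemma avoids132_inv_iff {n : ℕ} {π : Perm (Fin n)} : avoids132 π⁻¹ ↔ avoids132 π :=
  ⟨fun h => by simpa using h.inv, avoids132.inv⟩

theorem stmt15 (n a b c : ℕ) :
    Nat.card {π : Equiv.Perm (Fin n) // avoids132 π ∧
      occ23_1 π = a ∧ occ3_12 π = b ∧ des π = c} =
    Nat.card {π : Equiv.Perm (Fin n) // avoids132 π ∧
      occ3_12 π = a ∧ occ23_1 π = b ∧ des π = c} := by
  refine Nat.card_congr (Equiv.subtypeEquiv (Equiv.inv _) fun π => ?_)
  rw [Equiv.inv_apply, avoids132_inv_iff]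
  exact and_congr_right fun h => by rw [h.occ3_12_inv, h.occ23_1_inv, h.des_inv]
end
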